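/- arXiv:1301.6356 — 3 statements merged into one kernel-verified Lean document; each statement's English description precedes it below -/
import Mathlib

section
/- For p₀ ∈ (0,1) and α > -1, with x* = p₀^{1/(1+α)}/(p₀^{1/(1+α)} + (1-p₀)^{1/(1+α)}), one has α h(x*) - D(x*‖p₀) = (1+α) log(p₀^{1/(1+α)} + (1-p₀)^{1/(1+α)}). -/
/-- Binary Shannon entropy (natural logarithm). -/
noncomputable def binEnt (x : ℝ) : ℝ := -x * Real.log x - (1 - x) * Real.log (1 - x)

/-- Binary relative entropy D(x‖p). -/
noncomputable def binKL (x p : ℝ) : ℝ :=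
  x * Real.log (x / p) + (1 - x) * Real.log ((1 - x) / (1 - p))

/-!
Write `s = 1/(1+α)`, `a = p₀^s`, `b = (1-p₀)^s`, so that `x* = a/(a+b)`. Splitting the relative
entropy as `D(x‖p₀) = -h(x) - x log p₀ - (1-x) log(1-p₀)` turns the left side into
`(1+α) h(x*) + x* log p₀ + (1-x*) log(1-p₀)`, and for normalized weights
`h(a/(a+b)) = log(a+b) - x* log a - (1-x*) log b` with `(1+α) log a = log p₀`,
`(1+α) log b = log(1-p₀)`: everything but `(1+α) log(a+b)` cancels.
-/

open Real

lemma mul_log_div_of_ne_zero (x : ℝ) {p : ℝ} (hp : p ≠ 0) :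
    x * log (x / p) = x * log x - x * log p := by
  rcases eq_or_ne x 0 with rfl | hx
  · simp
  · rw [log_div hx hp, mul_sub]

lemma binKL_eq_neg_binEnt_sub (x : ℝ) {p : ℝ} (hp₀ : p ≠ 0) (hp₁ : 1 - p ≠ 0) :
    binKL x p = -binEnt x - (x * log p + (1 - x) * log (1 - p)) := by
  rw [binKL, binEnt, mul_log_div_of_ne_zero x hp₀, mul_log_div_of_ne_zero (1 - x) hp₁]
  ring

lemma one_sub_div_add {a b : ℝ} (hab : a + b ≠ 0) : 1 - a / (a + b) = b / (a + b) := by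
  field_simp
  ring

lemma binEnt_div_add {a b : ℝ} (ha : 0 < a) (hb : 0 < b) :
    binEnt (a / (a + b)) = log (a + b) - a / (a + b) * log a - b / (a + b) * log b := by
  have hab : a + b ≠ 0 := by positivity
  rw [binEnt, one_sub_div_add hab, log_div ha.ne' hab, log_div hb.ne' hab]
  field_simp
  ring

/-- Evaluation of the sCGF: α h(x*) - D(x*‖p₀) = (1+α) log(p₀^{1/(1+α)} + (1-p₀)^{1/(1+α)}). -/
theorem sCGF_evaluation (p₀ α : ℝ) (hp : p₀ ∈ Set.Ioo (0 : ℝ) 1) (hα : -1 < α) (xs : ℝ)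
    (hxs : xs = p₀ ^ (1 / (1 + α)) / (p₀ ^ (1 / (1 + α)) + (1 - p₀) ^ (1 / (1 + α)))) :
    α * binEnt xs - binKL xs p₀ =
      (1 + α) * Real.log (p₀ ^ (1 / (1 + α)) + (1 - p₀) ^ (1 / (1 + α))) := by
  obtain ⟨hp₀, hp₁⟩ := hp
  have hq₀ : 0 < 1 - p₀ := by linarith
  have hα₀ : 1 + α ≠ 0 := by linarith
  set a := p₀ ^ (1 / (1 + α))
  set b := (1 - p₀) ^ (1 / (1 + α))
  have ha : 0 < a := rpow_pos_of_pos hp₀ _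
  have hb : 0 < b := rpow_pos_of_pos hq₀ _
  rw [hxs, binKL_eq_neg_binEnt_sub _ hp₀.ne' hq₀.ne', one_sub_div_add (by positivity),
    binEnt_div_add ha hb, log_rpow hp₀, log_rpow hq₀]
  field_simp
  ring
end

section
/- For p₀ ∈ (1/2,1) and l⁻ ∈ (1/2, p₀), h(l⁻) - 2 log(√p₀ + √(1-p₀)) can be either positive or negative: there exist choices (p₀, ε) admissible (i.e. 0 < ε < (log p₀ - log(1-p₀)) min(p₀-1/2, 1-p₀), l⁻ = p₀ - ε/(log p₀-log(1-p₀))) with h(l⁻) > 2 log(√p₀+√(1-p₀)), and admissible choices with h(l⁻) < 2 log(√p₀+√(1-p₀)). -/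
lemma lt_log_of (q x : ℝ) (n : ℕ) (hn : 0 < n) (hq : q / n < 1)
    (h : 1 < (1 - q / n) ^ n * x) : q < Real.log x := by
  have hn' : (0:ℝ) < n := Nat.cast_pos.mpr hn
  have h1 : 0 < 1 - q / n := by linarith
  have hpow : 0 < (1 - q / n) ^ n := pow_pos h1 n
  have hx : 0 < x := by nlinarith
  rw [Real.lt_log_iff_exp_lt hx]
  have h2 := Real.add_one_le_exp (-(q / n))
  rw [Real.exp_neg] at h2
  have hep : 0 < Real.exp (q / n) := Real.exp_pos _
  have key : Real.exp (q / n) * (1 - q / n) ≤ 1 := by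
    have h3 : Real.exp (q / n) * (-(q / n) + 1) ≤ Real.exp (q / n) * (Real.exp (q / n))⁻¹ :=
      mul_le_mul_of_nonneg_left h2 hep.le
    rw [mul_inv_cancel₀ hep.ne'] at h3
    linarith [h3]
  have hexpq : Real.exp q = (Real.exp (q / n)) ^ n := by
    rw [← Real.exp_nat_mul]
    congr 1
    field_simp
  have key2 : Real.exp q * (1 - q / n) ^ n ≤ 1 := by
    rw [hexpq, ← mul_pow]
    exact pow_le_one₀ (by positivity) key
  have : Real.exp q * (1 - q / n) ^ n < x * (1 - q / n) ^ n := by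
    calc Real.exp q * (1 - q / n) ^ n ≤ 1 := key2
    _ < (1 - q / n) ^ n * x := h
    _ = x * (1 - q / n) ^ n := by ring
  exact lt_of_mul_lt_mul_right this hpow.le

lemma log_lt_of (x q : ℝ) (n : ℕ) (hn : 0 < n) (h0 : 0 ≤ 1 + q / n) (hx : 0 < x)
    (h : x < (1 + q / n) ^ n) : Real.log x < q := by
  have hn' : (0:ℝ) < n := Nat.cast_pos.mpr hn
  rw [Real.log_lt_iff_lt_exp hx]
  have h1 : 1 + q / n ≤ Real.exp (q / n) := by linarith [Real.add_one_le_exp (q / n)]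
  have : (1 + q / n) ^ n ≤ Real.exp q := by
    calc (1 + q / n) ^ n ≤ (Real.exp (q / n)) ^ n := pow_le_pow_left₀ h0 h1 n
    _ = Real.exp q := by rw [← Real.exp_nat_mul]; congr 1; field_simp
  linarith

lemma sqrt_sum_eq : Real.sqrt (9/10) + Real.sqrt (1 - 9/10) = Real.sqrt (8/5) := by
  have e1 : Real.sqrt (9/10 : ℝ) = (3/10) * Real.sqrt 10 := by
    rw [show (9:ℝ)/10 = (3/10)^2 * 10 by norm_num, Real.sqrt_mul (by positivity),
      Real.sqrt_sq (by norm_num)]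
  have e2 : Real.sqrt (1 - 9/10 : ℝ) = (1/10) * Real.sqrt 10 := by
    rw [show (1:ℝ) - 9/10 = (1/10)^2 * 10 by norm_num, Real.sqrt_mul (by positivity),
      Real.sqrt_sq (by norm_num)]
  have e3 : Real.sqrt (8/5 : ℝ) = (2/5) * Real.sqrt 10 := by
    rw [show (8:ℝ)/5 = (2/5)^2 * 10 by norm_num, Real.sqrt_mul (by positivity),
      Real.sqrt_sq (by norm_num)]
  rw [e1, e2, e3]; ring

lemma two_log_sqrt : 2 * Real.log (Real.sqrt (9/10) + Real.sqrt (1 - 9/10)) = Real.log (8/5) := by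
  rw [sqrt_sum_eq, Real.log_sqrt (by norm_num)]
  ring

/-- There is no universal ordering between the growth rate h(l⁻) of the expected Guesswork of
the uniform approximation and the rate 2 log(√p₀+√(1-p₀)) of the unconditioned source. -/
theorem no_universal_ordering :
    (∃ p₀ ε : ℝ, p₀ ∈ Set.Ioo (1 / 2 : ℝ) 1 ∧ 0 < ε ∧
      ε < (Real.log p₀ - Real.log (1 - p₀)) * min (p₀ - 1 / 2) (1 - p₀) ∧
      binEnt (p₀ - ε / (Real.log p₀ - Real.log (1 - p₀))) >
        2 * Real.log (Real.sqrt p₀ + Real.sqrt (1 - p₀))) ∧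
    (∃ p₀ ε : ℝ, p₀ ∈ Set.Ioo (1 / 2 : ℝ) 1 ∧ 0 < ε ∧
      ε < (Real.log p₀ - Real.log (1 - p₀)) * min (p₀ - 1 / 2) (1 - p₀) ∧
      binEnt (p₀ - ε / (Real.log p₀ - Real.log (1 - p₀))) <
        2 * Real.log (Real.sqrt p₀ + Real.sqrt (1 - p₀))) := by
  have hD : 0 < Real.log (9/10 : ℝ) - Real.log (1 - 9/10) := by
    have : Real.log (1 - 9/10 : ℝ) < Real.log (9/10) :=
      Real.log_lt_log (by norm_num) (by norm_num)
    linarith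
  have hmin : min ((9:ℝ)/10 - 1/2) (1 - 9/10) = 1/10 := by norm_num
  constructor
  · refine ⟨9/10, 9/100 * (Real.log (9/10) - Real.log (1 - 9/10)), by norm_num, by positivity,
      ?_, ?_⟩
    · rw [hmin]; linarith
    · have harg : (9:ℝ)/10 - 9/100 * (Real.log (9/10) - Real.log (1 - 9/10)) /
          (Real.log (9/10) - Real.log (1 - 9/10)) = 81/100 := by
        rw [mul_div_assoc, div_self hD.ne', mul_one]; norm_num
      rw [harg, two_log_sqrt]
      have hL1 : (131/625 : ℝ) < Real.log (100/81) :=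
        lt_log_of _ _ 32 (by norm_num) (by norm_num) (by norm_num)
      have hL2 : (163/100 : ℝ) < Real.log (100/19) :=
        lt_log_of _ _ 64 (by norm_num) (by norm_num) (by norm_num)
      have hC : Real.log (8/5 : ℝ) < 119/250 :=
        log_lt_of _ _ 32 (by norm_num) (by norm_num) (by norm_num) (by norm_num)
      have e1 : Real.log (81/100 : ℝ) = -Real.log (100/81) := by
        rw [show (81:ℝ)/100 = (100/81)⁻¹ by norm_num, Real.log_inv]
      have e2 : Real.log (1 - 81/100 : ℝ) = -Real.log (100/19) := by
        rw [show (1:ℝ) - 81/100 = (100/19)⁻¹ by norm_num, Real.log_inv]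
      unfold binEnt
      rw [e1, e2]
      nlinarith [hL1, hL2, hC]
  · refine ⟨9/10, 1/100 * (Real.log (9/10) - Real.log (1 - 9/10)), by norm_num, by positivity,
      ?_, ?_⟩
    · rw [hmin]; linarith
    · have harg : (9:ℝ)/10 - 1/100 * (Real.log (9/10) - Real.log (1 - 9/10)) /
          (Real.log (9/10) - Real.log (1 - 9/10)) = 89/100 := by
        rw [mul_div_assoc, div_self hD.ne', mul_one]; norm_num
      rw [harg, two_log_sqrt]
      have hU1 : Real.log (100/89 : ℝ) < 3/25 :=
        log_lt_of _ _ 8 (by norm_num) (by norm_num) (by norm_num) (by norm_num)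
      have hU2 : Real.log (100/11 : ℝ) < 23/10 :=
        log_lt_of _ _ 32 (by norm_num) (by norm_num) (by norm_num) (by norm_num)
      have hC2 : (9/20 : ℝ) < Real.log (8/5) :=
        lt_log_of _ _ 8 (by norm_num) (by norm_num) (by norm_num)
      have e1 : Real.log (89/100 : ℝ) = -Real.log (100/89) := by
        rw [show (89:ℝ)/100 = (100/89)⁻¹ by norm_num, Real.log_inv]
      have e2 : Real.log (1 - 89/100 : ℝ) = -Real.log (100/11) := by
        rw [show (1:ℝ) - 89/100 = (100/11)⁻¹ by norm_num, Real.log_inv]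
      unfold binEnt
      rw [e1, e2]
      nlinarith [hU1, hU2, hC2]
end

section
/- Let ε > 0, p₀ ∈ (1/2,1), h(p₀) + ε < log 2, and for each k let L_{ε,k} be the set of rationals j/k, j ∈ {0,…,k}, with -(j/k) log p₀ - (1 - j/k) log(1-p₀) ∈ [h(p₀)-ε, h(p₀)+ε]. Then lim_{k→∞} (1/k) log ∑_{j : j/k ∈ L_{ε,k}} C(k,j) = h(l⁻), where l⁻ = p₀ - ε/(log p₀ - log(1-p₀)) and h is binary entropy. -/
/-!
With `D = log p₀ - log (1 - p₀) > 0` the cross entropy `-x log p₀ - (1 - x) log (1 - p₀)` equals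
`h(p₀) + (p₀ - x) D`, so the typical set consists of the `j` with `j / k ∈ [l⁻, l⁺]`,
`l^± = p₀ ± ε / D`. Concavity of `h` and `h(p₀) + ε < log 2` put `l⁻` above `1/2`, where `h` is
decreasing.

Comparing `C(k, j) j^j (k - j)^(k - j)` with the largest term of the binomial expansion of
`k^k = (j + (k - j))^k` gives `exp (k h(j/k)) / (k + 1) ≤ C(k, j) ≤ exp (k h(j/k))`. Hence the sum
is at most `(k + 1) exp (k h(l⁻))` and at least `C(k, ⌈k l⁻⌉) ≥ exp (k h(⌈k l⁻⌉ / k)) / (k + 1)`;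
both bounds grow at the exponential rate `h(l⁻)`.
-/

open scoped Classical

open Finset Real Filter Topology

lemma binEnt_eq_binEntropy : binEnt = binEntropy := by
  ext x
  simp only [binEnt, binEntropy_eq_negMulLog_add_negMulLog_one_sub, negMulLog]
  ring

namespace Nat

def binomTerm (k j i : ℕ) : ℕ := k.choose i * j ^ i * (k - j) ^ (k - i)

variable {k j i : ℕ}

lemma binomTerm_succ_mul (hi : i < k) :
    binomTerm k j (i + 1) * ((i + 1) * (k - j)) = binomTerm k j i * ((k - i) * j) := by
  have hpow : (k - j) ^ (k - i) = (k - j) ^ (k - (i + 1)) * (k - j) := by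
    rw [← pow_succ]; congr 1; omega
  calc _ = (k.choose (i + 1) * (i + 1)) * j ^ i * (k - j) ^ (k - (i + 1)) * (k - j) * j := by
        simp only [binomTerm]; ring
    _ = _ := by rw [choose_succ_right_eq, binomTerm, hpow]; ring

lemma binomTerm_le_succ (hj : j ≤ k) (hi : i < j) : binomTerm k j i ≤ binomTerm k j (i + 1) := by
  rcases hj.eq_or_lt with rfl | hjk
  · simp [binomTerm, zero_pow (Nat.sub_ne_zero_of_lt hi)]
  refine le_of_mul_le_mul_right (a := (i + 1) * (k - j)) ?_ (by simp [hjk])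
  rw [binomTerm_succ_mul (by omega)]
  refine Nat.mul_le_mul_left _ ?_
  zify [hjk.le, show i ≤ k by omega]
  nlinarith

lemma binomTerm_succ_le (hi : j ≤ i) : binomTerm k j (i + 1) ≤ binomTerm k j i := by
  rcases le_or_gt k i with hki | hik
  · simp [binomTerm, choose_eq_zero_of_lt (Nat.lt_succ_of_le hki)]
  refine le_of_mul_le_mul_right (a := (i + 1) * (k - j)) ?_ (by simp; omega)
  rw [binomTerm_succ_mul hik]
  refine Nat.mul_le_mul_left _ ?_
  zify [hik.le, show j ≤ k by omega]
  nlinarith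

lemma binomTerm_le_binomTerm_self (hj : j ≤ k) (i : ℕ) : binomTerm k j i ≤ binomTerm k j j := by
  rcases le_total i j with hij | hji
  · exact monotoneOn_of_le_add_one (f := binomTerm k j) (s := Set.Iic j) Set.ordConnected_Iic
      (fun n _ _ hn => binomTerm_le_succ hj (Set.mem_Iic.1 hn)) hij (Set.mem_Iic.2 le_rfl) hij
  · exact antitoneOn_of_add_one_le (f := binomTerm k j) (s := Set.Ici j) Set.ordConnected_Ici
      (fun n _ hn _ => binomTerm_succ_le hn) (Set.mem_Ici.2 le_rfl) hji hji

lemma sum_binomTerm (hj : j ≤ k) : ∑ i ∈ range (k + 1), binomTerm k j i = k ^ k := by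
  rw [← Nat.add_sub_cancel' hj, add_pow, Nat.add_sub_cancel' hj]
  exact sum_congr rfl fun i _ => by rw [binomTerm, Nat.cast_id]; ring

lemma choose_mul_le_pow (hj : j ≤ k) : k.choose j * (j ^ j * (k - j) ^ (k - j)) ≤ k ^ k := by
  rw [← sum_binomTerm hj, ← mul_assoc]
  exact single_le_sum (f := binomTerm k j) (fun _ _ => zero_le _) (mem_range.2 (by omega))

lemma pow_le_succ_mul_choose_mul (hj : j ≤ k) :
    k ^ k ≤ (k + 1) * (k.choose j * (j ^ j * (k - j) ^ (k - j))) := by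
  have h := sum_le_card_nsmul (range (k + 1)) (binomTerm k j) _
    (fun i _ => binomTerm_le_binomTerm_self hj i)
  rwa [sum_binomTerm hj, card_range, smul_eq_mul, binomTerm, mul_assoc (k.choose j)] at h

end Nat

lemma mul_negMulLog_div {k : ℝ} (hk : k ≠ 0) (x : ℝ) :
    k * negMulLog (x / k) = x * log k - x * log x := by
  rcases eq_or_ne x 0 with rfl | hx
  · simp
  rw [negMulLog, log_div hx hk]
  field_simp
  ring

lemma natCast_mul_binEntropy_div {k j : ℕ} (hj : j ≤ k) :
    k * binEntropy (j / k) = log ((k ^ k : ℕ) : ℝ) - log ((j ^ j * (k - j) ^ (k - j) : ℕ) : ℝ) := by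
  rcases k.eq_zero_or_pos with rfl | hk
  · simp [Nat.le_zero.1 hj]
  have hk' : (k : ℝ) ≠ 0 := by positivity
  have hsub : 1 - (j : ℝ) / k = ((k - j : ℕ) : ℝ) / k := by
    rw [Nat.cast_sub hj]; field_simp
  have hsum : ((k - j : ℕ) : ℝ) + j = k := by rw [Nat.cast_sub hj]; ring
  rw [binEntropy_eq_negMulLog_add_negMulLog_one_sub, hsub, mul_add, mul_negMulLog_div hk',
    mul_negMulLog_div hk', Nat.cast_mul, log_mul (by exact_mod_cast Nat.pow_self_pos.ne')
      (by exact_mod_cast Nat.pow_self_pos.ne')]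
  simp only [Nat.cast_pow, log_pow]
  rw [← hsum]
  ring

lemma exp_natCast_mul_binEntropy_div {k j : ℕ} (hj : j ≤ k) :
    exp (k * binEntropy (j / k)) = ((k ^ k : ℕ) : ℝ) / ((j ^ j * (k - j) ^ (k - j) : ℕ) : ℝ) := by
  rw [natCast_mul_binEntropy_div hj, exp_sub, exp_log, exp_log]
  · exact_mod_cast Nat.mul_pos Nat.pow_self_pos Nat.pow_self_pos
  · exact_mod_cast Nat.pow_self_pos

lemma choose_le_exp_mul_binEntropy {k j : ℕ} (hj : j ≤ k) :
    (k.choose j : ℝ) ≤ exp (k * binEntropy (j / k)) := by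
  rw [exp_natCast_mul_binEntropy_div hj,
    le_div_iff₀ (by exact_mod_cast Nat.mul_pos Nat.pow_self_pos Nat.pow_self_pos)]
  exact_mod_cast Nat.choose_mul_le_pow hj

lemma exp_mul_binEntropy_le_succ_mul_choose {k j : ℕ} (hj : j ≤ k) :
    exp (k * binEntropy (j / k)) ≤ (k + 1) * k.choose j := by
  rw [exp_natCast_mul_binEntropy_div hj,
    div_le_iff₀ (by exact_mod_cast Nat.mul_pos Nat.pow_self_pos Nat.pow_self_pos), mul_assoc]
  exact_mod_cast Nat.pow_le_succ_mul_choose_mul hj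

lemma tendsto_log_natCast_add_one_div :
    Tendsto (fun k : ℕ => log (k + 1) / k) atTop (𝓝 0) := by
  have h := (tendsto_pow_log_div_mul_add_atTop 1 (-1) 1 one_ne_zero).comp
    (tendsto_atTop_add_const_right _ 1 tendsto_natCast_atTop_atTop)
  refine h.congr fun k => ?_
  simp

lemma tendsto_natCeil_mul_div {a : ℝ} (ha : 0 ≤ a) :
    Tendsto (fun k : ℕ => (⌈k * a⌉₊ : ℝ) / k) atTop (𝓝 a) := by
  have hupper : Tendsto (fun k : ℕ => a + 1 / (k : ℝ)) atTop (𝓝 a) := by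
    simpa using tendsto_const_nhds.add (tendsto_one_div_atTop_nhds_zero_nat (𝕜 := ℝ))
  refine tendsto_of_tendsto_of_tendsto_of_le_of_le' tendsto_const_nhds hupper ?_ ?_ <;>
    filter_upwards [eventually_gt_atTop 0] with k hk <;>
    have hk' : (0 : ℝ) < k := by exact_mod_cast hk
  · rw [le_div_iff₀ hk', mul_comm]
    exact Nat.le_ceil _
  · rw [div_le_iff₀ hk', add_mul, one_div_mul_cancel hk'.ne', mul_comm a]
    exact (Nat.ceil_lt_add_one (by positivity)).le

lemma log_sum_choose_le {k : ℕ} {F : Finset ℕ} {c : ℝ} (hF : F ⊆ range (k + 1))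
    (hne : F.Nonempty) (hc : ∀ j ∈ F, binEntropy (j / k) ≤ c) :
    log (∑ j ∈ F, (k.choose j : ℝ)) ≤ log (k + 1) + k * c := by
  have hle : ∀ j ∈ F, j ≤ k := fun j hj => Nat.lt_succ_iff.1 (mem_range.1 (hF hj))
  have hpos : 0 < ∑ j ∈ F, (k.choose j : ℝ) :=
    sum_pos (fun j hj => by exact_mod_cast Nat.choose_pos (hle j hj)) hne
  have hcard : (F.card : ℝ) ≤ k + 1 := by
    simpa using (Nat.cast_le (α := ℝ)).2 (card_le_card hF)
  rw [← log_exp (k * c), ← log_mul (by positivity) (exp_ne_zero _)]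
  refine log_le_log hpos ?_
  calc ∑ j ∈ F, (k.choose j : ℝ) ≤ ∑ _j ∈ F, exp (k * c) := by
        refine sum_le_sum fun j hj => (choose_le_exp_mul_binEntropy (hle j hj)).trans ?_
        gcongr
        exact hc j hj
    _ ≤ (k + 1) * exp (k * c) := by
        rw [sum_const, nsmul_eq_mul]
        gcongr

lemma mul_binEntropy_sub_log_le_log_sum_choose {k j : ℕ} {F : Finset ℕ} (hj : j ≤ k)
    (hjF : j ∈ F) : k * binEntropy (j / k) - log (k + 1) ≤ log (∑ i ∈ F, (k.choose i : ℝ)) := by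
  have hchoose : (0 : ℝ) < k.choose j := by exact_mod_cast Nat.choose_pos hj
  have hsingle : (k.choose j : ℝ) ≤ ∑ i ∈ F, (k.choose i : ℝ) :=
    single_le_sum (f := fun i => (k.choose i : ℝ)) (fun _ _ => by positivity) hjF
  rw [le_log_iff_exp_le (hchoose.trans_le hsingle), exp_sub, exp_log (by positivity),
    div_le_iff₀ (by positivity), mul_comm _ ((k : ℝ) + 1)]
  calc exp (k * binEntropy (j / k)) ≤ (k + 1) * k.choose j :=
        exp_mul_binEntropy_le_succ_mul_choose hj
    _ ≤ (k + 1) * ∑ i ∈ F, (k.choose i : ℝ) := by gcongr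

theorem tendsto_log_sum_choose_filter_Icc {a b : ℝ} (ha : 2⁻¹ ≤ a) (ha₁ : a < 1) (hab : a < b) :
    Tendsto (fun k : ℕ => (1 / (k : ℝ)) * log (∑ j ∈ (range (k + 1)).filter
      (fun j : ℕ => (j : ℝ) / k ∈ Set.Icc a b), (k.choose j : ℝ))) atTop (𝓝 (binEntropy a)) := by
  have hceil := tendsto_natCeil_mul_div (by linarith : 0 ≤ a)
  have hlog := tendsto_log_natCast_add_one_div
  have hmem : ∀ᶠ k : ℕ in atTop, 0 < k ∧ ⌈k * a⌉₊ ≤ k ∧ ⌈k * a⌉₊ ∈ (range (k + 1)).filter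
      (fun j : ℕ => (j : ℝ) / k ∈ Set.Icc a b) := by
    filter_upwards [eventually_gt_atTop 0, hceil.eventually_lt_const hab,
      hceil.eventually_lt_const ha₁] with k hk hb h1
    have hk' : (0 : ℝ) < k := by exact_mod_cast hk
    have hle : ⌈k * a⌉₊ ≤ k := by
      rw [div_lt_one hk'] at h1
      exact_mod_cast h1.le
    refine ⟨hk, hle, mem_filter.2 ⟨mem_range.2 (Nat.lt_succ_of_le hle), ?_, hb.le⟩⟩
    rw [le_div_iff₀ hk', mul_comm]
    exact Nat.le_ceil _
  refine tendsto_of_tendsto_of_tendsto_of_le_of_le'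
    (g := fun k : ℕ => binEntropy (⌈k * a⌉₊ / k) - log (k + 1) / k)
    (h := fun k : ℕ => binEntropy a + log (k + 1) / k) ?_ ?_ ?_ ?_
  · simpa using ((binEntropy_continuous.tendsto a).comp hceil).sub hlog
  · simpa using tendsto_const_nhds.add hlog
  · filter_upwards [hmem] with k ⟨hk, hle, hJ⟩
    have hk' : (0 : ℝ) < k := by exact_mod_cast hk
    calc _ = (1 / (k : ℝ)) * (k * binEntropy (⌈k * a⌉₊ / k) - log (k + 1)) := by
          field_simp
      _ ≤ _ := by
          gcongr
          exact mul_binEntropy_sub_log_le_log_sum_choose hle hJ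
  · filter_upwards [hmem] with k ⟨hk, _, hJ⟩
    have hk' : (0 : ℝ) < k := by exact_mod_cast hk
    have hentropy : ∀ j ∈ (range (k + 1)).filter (fun j : ℕ => (j : ℝ) / k ∈ Set.Icc a b),
        binEntropy (j / k) ≤ binEntropy a := by
      intro j hj
      obtain ⟨hjk, hja, -⟩ := mem_filter.1 hj
      refine binEntropy_strictAntiOn.antitoneOn ⟨ha, ha₁.le⟩ ⟨ha.trans hja, ?_⟩ hja
      rw [div_le_one hk']
      exact_mod_cast Nat.lt_succ_iff.1 (mem_range.1 hjk)
    calc _ ≤ (1 / (k : ℝ)) * (log (k + 1) + k * binEntropy a) := by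
          gcongr
          exact log_sum_choose_le (filter_subset _ _) ⟨_, hJ⟩ hentropy
      _ = _ := by
          field_simp
          ring

lemma crossEntropy_mem_Icc_iff {p ε x : ℝ} (hD : 0 < log p - log (1 - p)) :
    -x * log p - (1 - x) * log (1 - p) ∈ Set.Icc (binEntropy p - ε) (binEntropy p + ε) ↔
      x ∈ Set.Icc (p - ε / (log p - log (1 - p))) (p + ε / (log p - log (1 - p))) := by
  have hcross : -x * log p - (1 - x) * log (1 - p) =
      binEntropy p + (p - x) * (log p - log (1 - p)) := by
    rw [← binEnt_eq_binEntropy, binEnt]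
    ring
  obtain ⟨δ, rfl⟩ : ∃ δ, ε = δ * (log p - log (1 - p)) := ⟨ε / (log p - log (1 - p)), by field_simp⟩
  simp only [hcross, Set.mem_Icc, mul_div_cancel_right₀ _ hD.ne']
  constructor <;> rintro ⟨h₁, h₂⟩ <;> constructor <;> nlinarith

/-- The tangent line at `p` of the concave function `binEntropy` lies above its value
`log 2` at `2⁻¹`. -/
lemma log_two_sub_binEntropy_le {p : ℝ} (hp₀ : 0 < p) (hp₁ : p < 1) :
    log 2 - binEntropy p ≤ (p - 2⁻¹) * (log p - log (1 - p)) := by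
  have hprod : log p + log (1 - p) ≤ -(2 * log 2) := by
    rw [← log_mul hp₀.ne' (by linarith)]
    calc log (p * (1 - p)) ≤ log 4⁻¹ :=
          log_le_log (by nlinarith) (by nlinarith [sq_nonneg (p - 2⁻¹)])
      _ = -(2 * log 2) := by
          rw [log_inv, show (4 : ℝ) = 2 ^ 2 by norm_num, log_pow, Nat.cast_ofNat]
  rw [← binEnt_eq_binEntropy, binEnt]
  nlinarith

/-- The exponential growth rate of the size of the typical set of a Bernoulli(p₀) source is
h(l⁻), where l⁻ = p₀ - ε/(log p₀ - log(1-p₀)). -/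
theorem typical_set_growth_rate (p₀ ε : ℝ) (hp : p₀ ∈ Set.Ioo (1 / 2 : ℝ) 1) (hε : 0 < ε)
    (hsmall : binEnt p₀ + ε < Real.log 2) :
    Filter.Tendsto
      (fun k : ℕ => (1 / (k : ℝ)) *
        Real.log (∑ j ∈ (Finset.range (k + 1)).filter
          (fun j : ℕ => -((j : ℝ) / k) * Real.log p₀ - (1 - (j : ℝ) / k) * Real.log (1 - p₀) ∈
            Set.Icc (binEnt p₀ - ε) (binEnt p₀ + ε)),
          (Nat.choose k j : ℝ)))
      Filter.atTop
      (nhds (binEnt (p₀ - ε / (Real.log p₀ - Real.log (1 - p₀))))) := by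
  obtain ⟨hp₀, hp₁⟩ := hp
  rw [binEnt_eq_binEntropy] at hsmall ⊢
  have hD : 0 < log p₀ - log (1 - p₀) := sub_pos.2 (log_lt_log (by linarith) (by linarith))
  have hδ : 0 < ε / (log p₀ - log (1 - p₀)) := div_pos hε hD
  have hhalf : 2⁻¹ < p₀ - ε / (log p₀ - log (1 - p₀)) := by
    have htangent := log_two_sub_binEntropy_le (by linarith) hp₁
    have hδ_lt : ε / (log p₀ - log (1 - p₀)) < p₀ - 2⁻¹ := (div_lt_iff₀ hD).2 (by linarith)
    linarith
  simp only [crossEntropy_mem_Icc_iff hD]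
  exact tendsto_log_sum_choose_filter_Icc hhalf.le (by linarith) (by linarith)
end
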